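/- Let V be a real Hilbert space, V_n a finite-dimensional subspace and W_m a complete subspace of V with β := β(V_n, W_m) > 0, and let u*(·) be the PBDW reconstruction map on W_m. Then for every u ∈ V and every noise element η ∈ W_m with ‖η‖ ≤ ε_noise, the reconstruction from the noisy observation ω̃ := P_{W_m} u + η satisfies ‖u − u*(ω̃)‖ ≤ (ε(u, V_n, W_m) + ε_noise)/β, where ε(u, V_n, W_m) := inf{‖u − v‖ : v ∈ V_n + (W_m ∩ V_n^⊥)}. -/

import Mathlib

/-!
Put `K := V_n + (W_m ∩ V_nᗮ)`. The bound `β ‖v‖ ≤ ‖P_W v‖` on `V_n` extends to `K`, because the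
two summands stay orthogonal after projecting onto `W`. For `e ∈ Wᗮ` and `k ∈ K`, Cauchy–Schwarz
applied to `⟪e, k⟫ = ⟪e, P_{Wᗮ} k⟫` gives `⟪e, k⟫² ≤ (1 - β²) ‖e‖² ‖k‖²`, hence `β ‖e‖ ≤ ‖e + k‖`:
this is the noiseless estimate. The reconstruction `u*(ω̃)` lies in `K` and satisfies
`P_W u*(ω̃) = ω̃`. Since `P_W` maps `K` onto `W`, the noise is `η = P_W x` for some `x ∈ K`; then
`u - (u*(ω̃) - x) ∈ Wᗮ` is controlled by the noiseless estimate and `β ‖x‖ ≤ ‖η‖`.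
-/

open Metric Submodule
open scoped RealInnerProductSpace

section

variable {V : Type*} [NormedAddCommGroup V] [InnerProductSpace ℝ V]

-- `sInf ∅ = 0`, so the constant of `X = ⊥` is `0`.
noncomputable def infSupConstant (X Y : Submodule ℝ V) [Y.HasOrthogonalProjection] : ℝ :=
  sInf {r : ℝ | ∃ x ∈ X, x ≠ 0 ∧ r = ‖Y.starProjection x‖ / ‖x‖}

section InfSupConstant

variable (X Y : Submodule ℝ V) [Y.HasOrthogonalProjection]

lemma bddBelow_infSupRatios :
    BddBelow {r : ℝ | ∃ x ∈ X, x ≠ 0 ∧ r = ‖Y.starProjection x‖ / ‖x‖} :=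
  ⟨0, by rintro _ ⟨x, -, -, rfl⟩; positivity⟩

lemma infSupConstant_mul_norm_le {x : V} (hx : x ∈ X) :
    infSupConstant X Y * ‖x‖ ≤ ‖Y.starProjection x‖ := by
  rcases eq_or_ne x 0 with rfl | hx0
  · simp
  · rw [← le_div_iff₀ (norm_pos_iff.2 hx0)]
    exact csInf_le (bddBelow_infSupRatios X Y) ⟨x, hx, hx0, rfl⟩

lemma infSupConstant_le_one : infSupConstant X Y ≤ 1 := by
  rcases Set.eq_empty_or_nonempty
    {r : ℝ | ∃ x ∈ X, x ≠ 0 ∧ r = ‖Y.starProjection x‖ / ‖x‖} with h | ⟨_, x, hx, hx0, rfl⟩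
  · rw [infSupConstant, h, Real.sInf_empty]
    exact zero_le_one
  · exact csInf_le_of_le (bddBelow_infSupRatios X Y) ⟨x, hx, hx0, rfl⟩
      (div_le_one_of_le₀ (Y.norm_starProjection_apply_le x) (norm_nonneg x))

end InfSupConstant

section InfSupBound

variable (W : Submodule ℝ V) [W.HasOrthogonalProjection] {β : ℝ}

lemma real_inner_sq_le_of_mem_orthogonal (hβ0 : 0 ≤ β) {e k : V} (he : e ∈ Wᗮ)
    (hk : β * ‖k‖ ≤ ‖W.starProjection k‖) :
    ⟪e, k⟫ ^ 2 ≤ (1 - β ^ 2) * ‖e‖ ^ 2 * ‖k‖ ^ 2 := by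
  have hek : ⟪e, k⟫ = ⟪e, Wᗮ.starProjection k⟫ := by
    rw [← inner_starProjection_left_eq_right, starProjection_eq_self_iff.2 he]
  have hpyth := norm_sq_eq_add_norm_sq_starProjection k W
  have hβk : (β * ‖k‖) ^ 2 ≤ ‖W.starProjection k‖ ^ 2 := by gcongr
  calc ⟪e, k⟫ ^ 2 ≤ (‖e‖ * ‖Wᗮ.starProjection k‖) ^ 2 := by
        rw [hek, ← sq_abs]; gcongr; exact abs_real_inner_le_norm _ _
    _ = ‖e‖ ^ 2 * (‖k‖ ^ 2 - ‖W.starProjection k‖ ^ 2) := by rw [mul_pow, hpyth]; ring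
    _ ≤ (1 - β ^ 2) * ‖e‖ ^ 2 * ‖k‖ ^ 2 := by nlinarith [sq_nonneg ‖e‖]

lemma mul_norm_le_norm_add_of_mem_orthogonal (hβ0 : 0 ≤ β) (hβ1 : β ≤ 1) {e k : V}
    (he : e ∈ Wᗮ) (hk : β * ‖k‖ ≤ ‖W.starProjection k‖) : β * ‖e‖ ≤ ‖e + k‖ := by
  have hinner := real_inner_sq_le_of_mem_orthogonal W hβ0 he hk
  have hsum : 0 ≤ (1 - β ^ 2) * ‖e‖ ^ 2 + ‖k‖ ^ 2 := by
    have : 0 ≤ 1 - β ^ 2 := by nlinarith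
    positivity
  -- `(2⟪e, k⟫)² ≤ 4xy ≤ (x + y)²` with `x = (1 - β²)‖e‖²`, `y = ‖k‖²`
  have hcross : -(2 * ⟪e, k⟫) ≤ (1 - β ^ 2) * ‖e‖ ^ 2 + ‖k‖ ^ 2 := by
    refine (abs_le_of_sq_le_sq' ?_ hsum).1 |> neg_le.1
    nlinarith [sq_nonneg ((1 - β ^ 2) * ‖e‖ ^ 2 - ‖k‖ ^ 2)]
  refine le_of_pow_le_pow_left₀ two_ne_zero (norm_nonneg _) ?_
  rw [norm_add_sq_real]
  nlinarith

lemma mul_norm_sub_le_infDist {K : Submodule ℝ V} (hβ0 : 0 ≤ β) (hβ1 : β ≤ 1)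
    (hK : ∀ k ∈ K, β * ‖k‖ ≤ ‖W.starProjection k‖) {u u₀ : V} (hu₀ : u₀ ∈ K)
    (hres : u - u₀ ∈ Wᗮ) : β * ‖u - u₀‖ ≤ infDist u K :=
  (le_infDist ⟨0, K.zero_mem⟩).2 fun k hk => by
    simpa [dist_eq_norm] using
      mul_norm_le_norm_add_of_mem_orthogonal W hβ0 hβ1 hres (hK _ (sub_mem hu₀ hk))

end InfSupBound

section PBDW

variable (Vn W : Submodule ℝ V) [W.HasOrthogonalProjection]

lemma mul_norm_le_norm_starProjection_of_mem_sup {β : ℝ} (hβ0 : 0 ≤ β) (hβ1 : β ≤ 1)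
    (hVn : ∀ v ∈ Vn, β * ‖v‖ ≤ ‖W.starProjection v‖) :
    ∀ k ∈ Vn ⊔ (W ⊓ Vnᗮ), β * ‖k‖ ≤ ‖W.starProjection k‖ := by
  intro _ hk
  obtain ⟨v, hv, w, hw, rfl⟩ := mem_sup.1 hk
  obtain ⟨hwW, hwV⟩ := mem_inf.1 hw
  have hvw : ⟪v, w⟫ = 0 := inner_right_of_mem_orthogonal hv hwV
  have hPvw : ⟪W.starProjection v, w⟫ = 0 := by
    rw [inner_starProjection_left_eq_right, starProjection_eq_self_iff.2 hwW, hvw]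
  have hPv : (β * ‖v‖) ^ 2 ≤ ‖W.starProjection v‖ ^ 2 := by gcongr; exact hVn v hv
  have hw : β ^ 2 * ‖w‖ ^ 2 ≤ ‖w‖ ^ 2 := by
    have : β ^ 2 ≤ 1 := by nlinarith
    nlinarith [sq_nonneg ‖w‖]
  refine le_of_pow_le_pow_left₀ two_ne_zero (norm_nonneg _) ?_
  rw [map_add, starProjection_eq_self_iff.2 hwW, mul_pow, norm_add_sq_real, norm_add_sq_real,
    hvw, hPvw]
  nlinarith

lemma exists_mem_sup_starProjection_eq [FiniteDimensional ℝ Vn] {η : V} (hη : η ∈ W) :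
    ∃ x ∈ Vn ⊔ (W ⊓ Vnᗮ), W.starProjection x = η := by
  set R := Vn.map (W.starProjection : V →ₗ[ℝ] V)
  obtain ⟨v, hv, hvη : W.starProjection v = R.starProjection η⟩ :=
    mem_map.1 (R.starProjection_apply_mem η)
  set q := η - R.starProjection η
  have hqW : q ∈ W := sub_mem hη (hvη ▸ W.starProjection_apply_mem v)
  have hqV : q ∈ Vnᗮ := fun v' hv' => by
    rw [← starProjection_eq_self_iff.2 hqW, ← inner_starProjection_left_eq_right]
    exact sub_starProjection_mem_orthogonal η _ (mem_map_of_mem hv')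
  refine ⟨v + q, add_mem_sup hv (mem_inf.2 ⟨hqW, hqV⟩), ?_⟩
  rw [map_add, starProjection_eq_self_iff.2 hqW, hvη]
  exact add_sub_cancel _ _

-- The PBDW reconstruction `u*(ω)`, given `v = v*(ω)`.
noncomputable def pbdw (v ω : V) : V := v + ω - W.starProjection v

lemma pbdw_mem_sup [Vn.HasOrthogonalProjection] {ω v : V} (hω : ω ∈ W) (hv : v ∈ Vn)
    (hvω : Vn.orthogonalProjectionOnto (W.starProjection v) = Vn.orthogonalProjectionOnto ω) :
    pbdw W v ω ∈ Vn ⊔ (W ⊓ Vnᗮ) := by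
  rw [pbdw, add_sub_assoc]
  refine add_mem_sup hv (mem_inf.2 ⟨sub_mem hω (coe_mem _), ?_⟩)
  rw [← orthogonalProjectionOnto_eq_zero_iff, map_sub, hvω, sub_self]

lemma starProjection_pbdw {ω : V} (hω : ω ∈ W) (v : V) :
    W.starProjection (pbdw W v ω) = ω := by
  rw [pbdw, map_sub, map_add, starProjection_eq_self_iff.2 hω,
    starProjection_eq_self_iff.2 (W.starProjection_apply_mem v)]
  exact add_sub_cancel_left _ _

end PBDW

end

/-- PBDW with noisy observations: if `ω̃ = P_{W_m} u + η` with `η ∈ W_m`,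
`‖η‖ ≤ ε_noise`, then `‖u − u*(ω̃)‖ ≤ (ε(u, V_n, W_m) + ε_noise)/β`, where
`ε(u, V_n, W_m) = inf {‖u − v‖ : v ∈ V_n + (W_m ∩ V_n^⊥)}` and
`u*(ω̃) = v*(ω̃) + ω̃ − P_{W_m} v*(ω̃)` with `v*(ω̃)` characterized by
`P_{V_n}(P_{W_m} v*(ω̃)) = P_{V_n} ω̃`. -/
theorem stmt5 {V : Type*} [NormedAddCommGroup V] [InnerProductSpace ℝ V]
    (Vn Wm : Submodule ℝ V) [FiniteDimensional ℝ Vn] [CompleteSpace Wm]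
    (β : ℝ)
    (hβdef : β = sInf {r : ℝ | ∃ v ∈ Vn, v ≠ 0 ∧
      r = ‖(Submodule.orthogonalProjectionOnto Wm v : V)‖ / ‖v‖})
    (hβ : 0 < β)
    (u η : V) (hη : η ∈ Wm) (εnoise : ℝ) (hηle : ‖η‖ ≤ εnoise)
    (vstar : Vn)
    (hvstar : Submodule.orthogonalProjectionOnto Vn ((Submodule.orthogonalProjectionOnto Wm (vstar : V) : V))
      = Submodule.orthogonalProjectionOnto Vn ((Submodule.orthogonalProjectionOnto Wm u : V) + η)) :
    ‖u - ((vstar : V) + ((Submodule.orthogonalProjectionOnto Wm u : V) + η)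
        - (Submodule.orthogonalProjectionOnto Wm (vstar : V) : V))‖
      ≤ (Metric.infDist u ((Vn ⊔ (Wm ⊓ Vnᗮ) : Submodule ℝ V) : Set V) + εnoise) / β := by
  simp only [← starProjection_apply] at hvstar ⊢
  replace hβdef : β = infSupConstant Vn Wm := hβdef
  have hβ1 : β ≤ 1 := hβdef ▸ infSupConstant_le_one Vn Wm
  have hK := mul_norm_le_norm_starProjection_of_mem_sup Vn Wm hβ.le hβ1
    fun v hv => hβdef ▸ infSupConstant_mul_norm_le Vn Wm hv
  have hω : Wm.starProjection u + η ∈ Wm := add_mem (coe_mem _) hη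
  change ‖u - pbdw Wm vstar (Wm.starProjection u + η)‖ ≤ _
  set ustar := pbdw Wm vstar (Wm.starProjection u + η)
  obtain ⟨x, hxK, hPx⟩ := exists_mem_sup_starProjection_eq Vn Wm hη
  have hres : u - (ustar - x) ∈ Wmᗮ := by
    rw [← starProjection_apply_eq_zero_iff, map_sub, map_sub, starProjection_pbdw Wm hω, hPx]
    abel
  have hnoiseless := mul_norm_sub_le_infDist Wm hβ.le hβ1 hK
    (sub_mem (pbdw_mem_sup Vn Wm hω vstar.2 hvstar) hxK) hres
  rw [le_div_iff₀ hβ, mul_comm]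
  calc β * ‖u - ustar‖ = β * ‖(u - (ustar - x)) - x‖ := by rw [sub_sub, sub_add_cancel]
    _ ≤ β * ‖u - (ustar - x)‖ + β * ‖x‖ := by rw [← mul_add]; gcongr; exact norm_sub_le _ _
    _ ≤ infDist u (Vn ⊔ (Wm ⊓ Vnᗮ) : Submodule ℝ V) + ‖η‖ :=
        add_le_add hnoiseless (hPx ▸ hK x hxK)
    _ ≤ _ := by gcongr
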